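/- In a (C,S)-permutive closed set X ⊆ A^G, every finite pattern P is a φ(P)-spanning set: for every x ∈ X, the restriction x|_{φ(P)} is uniquely determined by x|_P, where φ(P) is the (C,S)-filling closure of P. -/

import Mathlib

open scoped symmDiff

/-- The left translate `gS` of a finite shape `S` in a group `G`. -/
def gset {G : Type*} [Group G] (g : G) (S : Finset G) : Set G :=
  (fun s => g * s) '' (S : Set G)

/-- A `(C,S)`-filling move: `P ⊊ Q`, some translate `gS` meets `P` in exactly
`|S| - 1` elements, and `Q = P ∪ gC`. -/
def FillMove {G : Type*} [Group G] (C S : Finset G) (P Q : Set G) : Prop :=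
  P ⊂ Q ∧ ∃ g : G, (P ∩ gset g S).ncard = S.card - 1 ∧ Q = P ∪ gset g C

/-- The `(C,S)`-filling closure: the union of all sets reachable from `P` by
finitely many filling moves. -/
def fillClosure {G : Type*} [Group G] (C S : Finset G) (P : Set G) : Set G :=
  {x | ∃ Q : Set G, Relation.ReflTransGen (FillMove C S) P Q ∧ x ∈ Q}


/-- `X` is `(C,S)`-permutive: for each `c ∈ C` and `g ∈ G` there is a local rule
computing the symbol at `g·c` from the symbols on `g·(S \\ {c})`. -/
def Permutive {G A : Type*} [Group G] (C S : Finset G) (X : Set (G → A)) : Prop :=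
  ∀ c ∈ C, ∀ g : G, ∃ f : ({s : G // s ∈ S ∧ s ≠ c} → A) → A,
    ∀ x ∈ X, f (fun s => x (g * s.1)) = x (g * c)

/-!
If `gS` meets `P` in `|S| - 1` points and `gc ∉ P`, then `P` already contains all of
`gS \ {gc}`, so permutivity computes the symbol at `gc` from symbols on `P`. Hence two points
of `X` agreeing on `P` agree after each filling move, and by induction on the whole closure.
-/

open Set

lemma ncard_gset {G : Type*} [Group G] (g : G) (S : Finset G) :
    (gset g S).ncard = S.card := by
  rw [gset, ncard_image_of_injective _ (mul_right_injective g), ncard_coe_finset]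

lemma gset_diff_singleton_subset_of_ncard_inter {G : Type*} [Group G] {S : Finset G}
    {P : Set G} {g c : G} (hc : c ∈ S) (hgc : g * c ∉ P)
    (hcard : (P ∩ gset g S).ncard = S.card - 1) :
    gset g S \ {g * c} ⊆ P := by
  have hsub : P ∩ gset g S ⊆ gset g S \ {g * c} := by
    rintro t ⟨htP, htS⟩
    exact ⟨htS, by rintro rfl; exact hgc htP⟩
  have hfin : (gset g S \ {g * c}).Finite := (S.finite_toSet.image _).sdiff
  have heq : P ∩ gset g S = gset g S \ {g * c} := by
    refine eq_of_subset_of_ncard_le hsub ?_ hfin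
    have hgcS : g * c ∈ gset g S := ⟨c, hc, rfl⟩
    rw [ncard_sdiff_singleton_of_mem hgcS, ncard_gset, hcard]
  exact heq ▸ inter_subset_left

namespace Permutive

variable {G A : Type*} [Group G] {C S : Finset G} {X : Set (G → A)} {x y : G → A}

lemma apply_eq_of_eqOn (hperm : Permutive C S X) {c : G} (hc : c ∈ C) (g : G)
    (hx : x ∈ X) (hy : y ∈ X) (hxy : EqOn x y (gset g S \ {g * c})) :
    x (g * c) = y (g * c) := by
  obtain ⟨f, hf⟩ := hperm c hc g
  rw [← hf x hx, ← hf y hy]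
  exact congrArg f <| funext fun s =>
    hxy ⟨⟨s.1, s.2.1, rfl⟩, fun h => s.2.2 (mul_left_cancel h)⟩

lemma eqOn_of_fillMove (hperm : Permutive C S X) (hCS : C ⊆ S) (hx : x ∈ X) (hy : y ∈ X)
    {P Q : Set G} (hPQ : FillMove C S P Q) (hxy : EqOn x y P) : EqOn x y Q := by
  obtain ⟨-, g, hcard, rfl⟩ := hPQ
  rintro _ (hp | ⟨c, hc, rfl⟩)
  · exact hxy hp
  by_cases hgc : g * c ∈ P
  · exact hxy hgc
  exact hperm.apply_eq_of_eqOn hc g hx hy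
    (hxy.mono (gset_diff_singleton_subset_of_ncard_inter (hCS hc) hgc hcard))

lemma eqOn_of_reflTransGen_fillMove (hperm : Permutive C S X) (hCS : C ⊆ S) (hx : x ∈ X)
    (hy : y ∈ X) {P Q : Set G} (hPQ : Relation.ReflTransGen (FillMove C S) P Q)
    (hxy : EqOn x y P) : EqOn x y Q := by
  induction hPQ with
  | refl => exact hxy
  | tail _ hmove ih => exact hperm.eqOn_of_fillMove hCS hx hy hmove ih

lemma eqOn_fillClosure (hperm : Permutive C S X) (hCS : C ⊆ S) (hx : x ∈ X) (hy : y ∈ X)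
    {P : Set G} (hxy : EqOn x y P) : EqOn x y (fillClosure C S P) := by
  rintro q ⟨Q, hPQ, hq⟩
  exact hperm.eqOn_of_reflTransGen_fillMove hCS hx hy hPQ hxy hq

end Permutive

theorem spanned_contains_fillClosure_general {G A : Type*} [Group G]
    (C S : Finset G) (hCS : C ⊆ S) (X : Set (G → A))
    (hperm : Permutive C S X) (P : Finset G) :
    ∀ x ∈ X, ∀ y ∈ X, (∀ p ∈ P, x p = y p) →
      ∀ q ∈ fillClosure C S (P : Set G), x q = y q :=
  fun _ hx _ hy hxy _ hq => hperm.eqOn_fillClosure hCS hx hy (fun p hp => hxy p hp) hq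

/-- In a `(C,S)`-permutive closed set `X`, every finite pattern `P` is
`φ(P)`-spanning: the restriction of any `x ∈ X` to the filling closure of `P` is
uniquely determined by its restriction to `P`. -/
theorem spanned_contains_fillClosure {G A : Type*} [Group G] [Fintype A]
    [TopologicalSpace A] [DiscreteTopology A]
    (C S : Finset G) (hCS : C ⊆ S) (X : Set (G → A)) (hX : IsClosed X)
    (hperm : Permutive C S X) (P : Finset G) :
    ∀ x ∈ X, ∀ y ∈ X, (∀ p ∈ P, x p = y p) →
      ∀ q ∈ fillClosure C S (P : Set G), x q = y q :=
  spanned_contains_fillClosure_general C S hCS X hperm P
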